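/- Let I ⊆ k[x_1,…,x_n] be an ideal and ≺ a term order. For every v ∈ ℝ^n, v ∈ C_≺(I) if and only if in_≺(in_v(g)) = in_≺(g) for every g in the reduced Gröbner basis G_≺(I). -/

import Mathlib

/-!
For `g` in the reduced Gröbner basis, `in_≺(in_v g) = in_≺ g` says exactly that the leading
exponent of `g` has maximal `v`-weight among the exponents of `g`. These weak inequalities hold
whenever `in_u(I) = in_≺(I)`, because then `in_u(g) ∈ in_≺(I)` while no tail monomial of `g` lies
in `in_≺(I)`; being closed conditions, they hold on all of `C_≺(I)`. Conversely, finitely many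
strict `≺`-inequalities are realized by a single weight `w` (separation, plus a rationality
argument that turns a real relation into an integer one, which a term order forbids). For
`ε > 0` the weight `v + ε w` makes every leading exponent of the basis strictly heaviest, which
forces `in_{v+εw}(I) = in_≺(I)` by cancelling leading terms against the basis; letting `ε → 0`
puts `v` in the closure.
-/

open MvPolynomial

/-- A term order on the monomials of `k[x_1,…,x_n]`, identified with exponent
vectors in `ℕ^n`: a strict total order with `1` smallest and compatible with
multiplication of monomials. -/
structure TermOrder (n : ℕ) : Type where
  lt : (Fin n →₀ ℕ) → (Fin n →₀ ℕ) → Prop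
  irrefl : ∀ a, ¬ lt a a
  trans : ∀ a b c, lt a b → lt b c → lt a c
  total : ∀ a b, a ≠ b → lt a b ∨ lt b a
  zero_lt : ∀ a, a ≠ 0 → lt 0 a
  add_right : ∀ a b c, lt a b → lt (a + c) (b + c)

variable {n : ℕ} {k : Type*} [Field k]

/-- The exponent of the `τ`-largest term of `f` (and `0` if `f = 0`). -/
noncomputable def TermOrder.leadExp (τ : TermOrder n) (f : MvPolynomial (Fin n) k) :
    Fin n →₀ ℕ :=
  letI := Classical.propDecidable (∃ α, α ∈ f.support ∧ ∀ β ∈ f.support, β ≠ α → τ.lt β α)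
  if h : ∃ α, α ∈ f.support ∧ ∀ β ∈ f.support, β ≠ α → τ.lt β α then h.choose else 0

/-- The initial term `in_τ(f)` : the `τ`-largest term of `f` (with coefficient). -/
noncomputable def TermOrder.initialTerm (τ : TermOrder n) (f : MvPolynomial (Fin n) k) :
    MvPolynomial (Fin n) k :=
  monomial (τ.leadExp f) (f.coeff (τ.leadExp f))

/-- The initial ideal `in_τ(I) = ⟨in_τ(f) : f ∈ I \ {0}⟩`. -/
noncomputable def TermOrder.initialIdeal (τ : TermOrder n) (I : Ideal (MvPolynomial (Fin n) k)) :
    Ideal (MvPolynomial (Fin n) k) :=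
  Ideal.span {p | ∃ f ∈ I, f ≠ 0 ∧ p = τ.initialTerm f}

/-- The `ω`-degree `⟨ω,α⟩` of a monomial exponent `α`. -/
noncomputable def wdeg (ω : Fin n → ℝ) (α : Fin n →₀ ℕ) : ℝ := ∑ i, ω i * (α i : ℝ)

/-- The initial form `in_ω(f)`: the sum of the terms of `f` whose exponents
maximize `⟨ω,·⟩`. -/
noncomputable def initialForm (ω : Fin n → ℝ) (f : MvPolynomial (Fin n) k) :
    MvPolynomial (Fin n) k :=
  letI : DecidablePred fun α : Fin n →₀ ℕ => ∀ β ∈ f.support, wdeg ω β ≤ wdeg ω α :=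
    Classical.decPred _
  ∑ α ∈ f.support.filter (fun α => ∀ β ∈ f.support, wdeg ω β ≤ wdeg ω α),
    monomial α (f.coeff α)

/-- The initial ideal `in_ω(I) = ⟨in_ω(f) : f ∈ I⟩`. -/
noncomputable def initialFormIdeal (ω : Fin n → ℝ) (I : Ideal (MvPolynomial (Fin n) k)) :
    Ideal (MvPolynomial (Fin n) k) :=
  Ideal.span {p | ∃ f ∈ I, p = initialForm ω f}

/-- `C_≺(I)`: the closure of `{u : in_u(I) = in_≺(I)}` in `ℝ^n`. -/
noncomputable def Cprec (τ : TermOrder n) (I : Ideal (MvPolynomial (Fin n) k)) :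
    Set (Fin n → ℝ) :=
  closure {u : Fin n → ℝ | initialFormIdeal u I = τ.initialIdeal I}

/-- `C_v(I)`: the closure of the equivalence class `{u : in_u(I) = in_v(I)}`. -/
noncomputable def Cv (I : Ideal (MvPolynomial (Fin n) k)) (v : Fin n → ℝ) :
    Set (Fin n → ℝ) :=
  closure {u : Fin n → ℝ | initialFormIdeal u I = initialFormIdeal v I}

/-- `F` is a face of `C`: either empty or the set of maximizers over `C` of a
linear functional. -/
def IsFaceOf (C F : Set (Fin n → ℝ)) : Prop :=
  F = ∅ ∨ ∃ w : Fin n → ℝ, F = {x ∈ C | ∀ y ∈ C, ∑ i, w i * y i ≤ ∑ i, w i * x i}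

/-- The Gröbner fan of `I`: all nonempty faces of the cones `C_v(I)`, `v ∈ ℝ^n_{>0}`. -/
noncomputable def GroebnerFan (I : Ideal (MvPolynomial (Fin n) k)) :
    Set (Set (Fin n → ℝ)) :=
  {F | F.Nonempty ∧ ∃ v : Fin n → ℝ, (∀ i, 0 < v i) ∧ IsFaceOf (Cv I v) F}

/-- `G` is a (finite) Gröbner basis of `I` w.r.t. `τ`. -/
def IsGroebnerBasis (τ : TermOrder n) (I : Ideal (MvPolynomial (Fin n) k))
    (G : Set (MvPolynomial (Fin n) k)) : Prop :=
  G.Finite ∧ Ideal.span G = I ∧ τ.initialIdeal I = Ideal.span (τ.initialTerm '' G)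

/-- `G` is the reduced Gröbner basis of `I` w.r.t. `τ`. -/
def IsReducedGroebnerBasis (τ : TermOrder n) (I : Ideal (MvPolynomial (Fin n) k))
    (G : Set (MvPolynomial (Fin n) k)) : Prop :=
  IsGroebnerBasis τ I G ∧
  (∀ g ∈ G, g.coeff (τ.leadExp g) = 1) ∧
  (∀ g ∈ G, ∀ α ∈ g.support, α ≠ τ.leadExp g →
    (monomial α 1 : MvPolynomial (Fin n) k) ∉ τ.initialIdeal I) ∧
  (∀ g ∈ G, Ideal.span (τ.initialTerm '' (G \ {g})) ≠ τ.initialIdeal I)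

namespace TermOrder

variable (τ : TermOrder n)

lemma isStrictOrder : IsStrictOrder (Fin n →₀ ℕ) τ.lt :=
  { irrefl := τ.irrefl, trans := τ.trans }

lemma lt_of_le_of_ne {a b : Fin n →₀ ℕ} (hle : a ≤ b) (hne : a ≠ b) : τ.lt a b := by
  have h := τ.add_right 0 (b - a) a (τ.zero_lt _ (tsub_pos_of_lt (hle.lt_of_ne hne)).ne')
  rwa [zero_add, tsub_add_cancel_of_le hle] at h

/-- Dickson's lemma. -/
lemma wellFounded_lt : WellFounded τ.lt := by
  have := τ.isStrictOrder
  refine RelEmbedding.wellFounded_iff_isEmpty.2 ⟨fun e => ?_⟩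
  obtain ⟨i, j, hij, hle⟩ := wellQuasiOrdered_le e
  have hlt : τ.lt (e j) (e i) := e.map_rel_iff.2 hij
  rcases eq_or_ne (e i) (e j) with heq | hne
  · exact τ.irrefl _ (heq ▸ hlt)
  · exact τ.irrefl _ (τ.trans _ _ _ (τ.lt_of_le_of_ne hle hne) hlt)

lemma exists_max {s : Finset (Fin n →₀ ℕ)} (hs : s.Nonempty) :
    ∃ a ∈ s, ∀ b ∈ s, b ≠ a → τ.lt b a := by
  have : IsStrictOrder _ (flip τ.lt) :=
    { irrefl := τ.irrefl, trans := fun a b c hab hbc => τ.trans c b a hbc hab }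
  obtain ⟨⟨a, ha⟩, -, hmin⟩ := (s.finite_toSet.wellFoundedOn (r := flip τ.lt)).has_min
    Set.univ ⟨⟨_, hs.choose_spec⟩, trivial⟩
  exact ⟨a, ha, fun b hb hne => (τ.total b a hne).resolve_right (hmin ⟨b, hb⟩ trivial)⟩

lemma add_lt_add {a b c d : Fin n →₀ ℕ} (h₁ : τ.lt a b) (h₂ : τ.lt c d) :
    τ.lt (a + c) (b + d) :=
  τ.trans _ _ _ (τ.add_right a b c h₁) (by simpa only [add_comm b] using τ.add_right c d b h₂)

lemma nsmul_lt_nsmul {a b : Fin n →₀ ℕ} (h : τ.lt a b) {K : ℕ} (hK : K ≠ 0) :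
    τ.lt (K • a) (K • b) := by
  induction K with
  | zero => exact absurd rfl hK
  | succ K ih =>
    rcases eq_or_ne K 0 with rfl | hK'
    · simpa using h
    · simpa only [succ_nsmul] using τ.add_lt_add (ih hK') h

lemma sum_lt_sum {ι : Type*} {s : Finset ι} (hs : s.Nonempty) {a b : ι → Fin n →₀ ℕ}
    (h : ∀ j ∈ s, τ.lt (a j) (b j)) : τ.lt (∑ j ∈ s, a j) (∑ j ∈ s, b j) := by
  induction hs using Finset.Nonempty.cons_induction with
  | singleton j => simpa using h j (by simp)
  | cons j s hj hs ih =>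
    rw [Finset.sum_cons, Finset.sum_cons]
    exact τ.add_lt_add (h j (by simp)) (ih fun i hi => h i (by simp [hi]))

lemma leadExp_spec {f : MvPolynomial (Fin n) k} (hf : f ≠ 0) :
    τ.leadExp f ∈ f.support ∧ ∀ β ∈ f.support, β ≠ τ.leadExp f → τ.lt β (τ.leadExp f) := by
  have hex := τ.exists_max (support_nonempty.2 hf)
  rw [leadExp, dif_pos hex]
  exact hex.choose_spec

lemma leadExp_eq_of_forall_lt {f : MvPolynomial (Fin n) k} {a : Fin n →₀ ℕ} (ha : a ∈ f.support)
    (hmax : ∀ β ∈ f.support, β ≠ a → τ.lt β a) : τ.leadExp f = a := by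
  have hf : f ≠ 0 := fun h0 => by simp [h0] at ha
  by_contra hne
  exact τ.irrefl _ (τ.trans _ _ _ ((τ.leadExp_spec hf).2 a ha (Ne.symm hne))
    (hmax _ (τ.leadExp_spec hf).1 hne))

lemma leadExp_mem_support_initialTerm {f : MvPolynomial (Fin n) k} (hf : f ≠ 0) :
    τ.leadExp f ∈ (τ.initialTerm f).support := by
  classical
  rw [initialTerm, support_monomial, if_neg (mem_support_iff.1 (τ.leadExp_spec hf).1)]
  exact Finset.mem_singleton_self _

lemma support_initialTerm_subset (f : MvPolynomial (Fin n) k) :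
    (τ.initialTerm f).support ⊆ f.support := by
  intro α hα
  rw [initialTerm, mem_support_iff, coeff_monomial] at hα
  split_ifs at hα with h
  exacts [h ▸ mem_support_iff.2 hα, absurd rfl hα]

end TermOrder

section BaseChange

variable {K L : Type*} [Field K] [Field L] [Algebra K L] {ι κ : Type*} [Finite κ]

lemma mem_span_of_algebraMap_comp_mem_span {v : ι → κ → K} (hv : LinearIndependent K v)
    {b : κ → K}
    (hb : algebraMap K L ∘ b ∈ Submodule.span L (Set.range fun j => algebraMap K L ∘ v j)) :
    b ∈ Submodule.span K (Set.range v) := by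
  by_contra hb'
  have hL := (linearIndependent_algebraMap_comp_iff (S := L)).2
    (linearIndependent_option'.2 ⟨hv, hb'⟩)
  have hcomp : (fun o => algebraMap K L ∘ Option.casesOn' o b v) =
      fun o => Option.casesOn' o (algebraMap K L ∘ b) fun j => algebraMap K L ∘ v j := by
    funext o
    cases o <;> rfl
  exact (linearIndependent_option'.1 (hcomp ▸ hL)).2 hb

variable [Fintype ι]

lemma exists_algebraMap_eq_of_sum_smul_eq {v : ι → κ → K}
    (hv : LinearIndependent L fun j => algebraMap K L ∘ v j) {b : κ → K} {c : ι → L}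
    (hc : ∑ j, c j • (algebraMap K L ∘ v j) = algebraMap K L ∘ b) :
    ∃ q : ι → K, ∀ j, algebraMap K L (q j) = c j := by
  have hb : algebraMap K L ∘ b ∈ Submodule.span L (Set.range fun j => algebraMap K L ∘ v j) :=
    hc ▸ Submodule.sum_mem _ fun j _ => Submodule.smul_mem _ _ (Submodule.subset_span ⟨j, rfl⟩)
  obtain ⟨q, hq⟩ := (Submodule.mem_span_range_iff_exists_fun K).1
    (mem_span_of_algebraMap_comp_mem_span (linearIndependent_algebraMap_comp_iff.1 hv) hb)
  refine ⟨q, Fintype.linearIndependent_iffₛ.1 hv _ _ ?_⟩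
  rw [hc, ← hq]
  funext i
  simp [Finset.sum_apply, map_sum, Algebra.smul_def]

lemma AffineIndependent.exists_algebraMap_eq {z : ι → κ → K}
    (hz : AffineIndependent L fun j => algebraMap K L ∘ z j) {b : κ → K} {c : ι → L}
    (hc₁ : ∑ j, c j = 1) (hc : ∑ j, c j • (algebraMap K L ∘ z j) = algebraMap K L ∘ b) :
    ∃ q : ι → K, ∀ j, algebraMap K L (q j) = c j := by
  refine exists_algebraMap_eq_of_sum_smul_eq (v := fun j (o : Option κ) => o.elim 1 (z j))
    (b := fun (o : Option κ) => o.elim 1 b) ?_ ?_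
  · refine Fintype.linearIndependent_iff.2 fun g hg => ?_
    have h₀ : ∑ j, g j = 0 := by simpa [Finset.sum_apply] using congrFun hg none
    have h₁ : ∑ j, g j • (algebraMap K L ∘ z j) = 0 := by
      funext i
      simpa [Finset.sum_apply] using congrFun hg (some i)
    exact fun j => hz.eq_zero_of_sum_eq_zero h₀ h₁ j (Finset.mem_univ j)
  · funext o
    cases o with
    | none => simpa [Finset.sum_apply] using hc₁
    | some i => simpa [Finset.sum_apply] using congrFun hc i

end BaseChange

lemma exists_nat_eq_mul {ι : Type*} [Fintype ι] {q : ι → ℚ} (hq : ∀ j, 0 ≤ q j) :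
    ∃ N : ℕ, 0 < N ∧ ∀ j, ∃ K : ℕ, (K : ℚ) = N * q j := by
  refine ⟨∏ j, (q j).den, Finset.prod_pos fun j _ => (q j).den_pos, fun j => ?_⟩
  obtain ⟨r, hr⟩ := Finset.dvd_prod_of_mem (fun j => (q j).den) (Finset.mem_univ j)
  have hnum : (((q j).num.toNat : ℕ) : ℚ) = (q j).num := by
    exact_mod_cast Int.toNat_of_nonneg (Rat.num_nonneg.2 (hq j))
  refine ⟨(q j).num.toNat * r, ?_⟩
  rw [hr, Nat.cast_mul, Nat.cast_mul, hnum, ← Rat.mul_den_eq_num]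
  ring

lemma TermOrder.sum_smul_sub_ne_zero (τ : TermOrder n) {ι : Type*} [Fintype ι] [Nonempty ι]
    {a b : ι → Fin n →₀ ℕ} (h : ∀ j, τ.lt (a j) (b j)) {q : ι → ℚ} (hq : ∀ j, 0 < q j) :
    ∑ j, q j • (fun i => (b j i : ℚ) - a j i) ≠ 0 := by
  intro hsum
  obtain ⟨N, hN, hK⟩ := exists_nat_eq_mul fun j => (hq j).le
  choose K hK using hK
  have hK0 : ∀ j, K j ≠ 0 := fun j h0 => by
    have := hK j
    rw [h0, Nat.cast_zero] at this
    nlinarith [hq j, (Nat.cast_pos.2 hN : (0 : ℚ) < N)]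
  have heq : ∑ j, K j • a j = ∑ j, K j • b j := by
    ext i
    have hi := congrFun hsum i
    simp only [Finset.sum_apply, Pi.smul_apply, smul_eq_mul, Pi.zero_apply] at hi
    simp only [Finsupp.coe_finsetSum, Finset.sum_apply, Finsupp.smul_apply, smul_eq_mul]
    have : ∑ j, (K j : ℚ) * (b j i - a j i) = 0 := by
      simp_rw [hK, mul_assoc, ← Finset.mul_sum, hi, mul_zero]
    simp only [mul_sub, Finset.sum_sub_distrib, sub_eq_zero] at this
    exact_mod_cast this.symm
  exact τ.irrefl _ (heq ▸ τ.sum_lt_sum Finset.univ_nonempty fun j _ =>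
    τ.nsmul_lt_nsmul (h j) (hK0 j))

lemma wdeg_add (ω : Fin n → ℝ) (a b : Fin n →₀ ℕ) : wdeg ω (a + b) = wdeg ω a + wdeg ω b := by
  simp only [wdeg, Finsupp.add_apply, Nat.cast_add, mul_add, Finset.sum_add_distrib]

lemma wdeg_add_smul (v w : Fin n → ℝ) (ε : ℝ) (a : Fin n →₀ ℕ) :
    wdeg (v + ε • w) a = wdeg v a + ε * wdeg w a := by
  simp only [wdeg, Pi.add_apply, Pi.smul_apply, smul_eq_mul, add_mul, Finset.sum_add_distrib,
    Finset.mul_sum, mul_assoc]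

lemma continuous_wdeg (a : Fin n →₀ ℕ) : Continuous fun ω : Fin n → ℝ => wdeg ω a := by
  unfold wdeg
  fun_prop

/-- Carathéodory writes `0` with positive weights over an affinely independent subfamily;
these weights are then rational, and a positive rational relation is impossible. -/
lemma TermOrder.zero_notMem_convexHull (τ : TermOrder n) {ι : Type*}
    {a b : ι → Fin n →₀ ℕ} (h : ∀ j, τ.lt (a j) (b j)) :
    (0 : Fin n → ℝ) ∉ convexHull ℝ (Set.range fun j i => (b j i : ℝ) - a j i) := by
  intro h0
  obtain ⟨ι', _, z, c, hz, haff, hc0, hc1, hcz⟩ := eq_pos_convex_span_of_mem_convexHull h0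
  choose P hP using fun j' => hz (Set.mem_range_self j')
  set d : ι' → Fin n → ℚ := fun j' i => (b (P j') i : ℚ) - a (P j') i
  have hzd : z = fun j' => algebraMap ℚ ℝ ∘ d j' := by
    funext j' i
    simp [d, ← hP j']
  subst hzd
  obtain ⟨q, hq⟩ := AffineIndependent.exists_algebraMap_eq (b := 0) haff hc1 (by simpa using hcz)
  have : Nonempty ι' := by
    by_contra hempty
    simp [not_nonempty_iff.1 hempty] at hc1
  refine τ.sum_smul_sub_ne_zero (fun j' => h (P j')) (q := q)
    (fun j' => by simpa [← hq j'] using hc0 j') ?_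
  funext i
  apply (algebraMap ℚ ℝ).injective
  simpa [Finset.sum_apply, ← hq, d] using congrFun hcz i

theorem TermOrder.exists_weight (τ : TermOrder n) {ι : Type*} [Finite ι]
    {a b : ι → Fin n →₀ ℕ} (h : ∀ j, τ.lt (a j) (b j)) :
    ∃ w : Fin n → ℝ, ∀ j, wdeg w (a j) < wdeg w (b j) := by
  obtain ⟨φ, u, hu0, hu⟩ := geometric_hahn_banach_point_closed (convex_convexHull ℝ _)
    ((Set.finite_range _).isCompact_convexHull (𝕜 := ℝ)).isClosed (τ.zero_notMem_convexHull h)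
  set w : Fin n → ℝ := fun i => φ fun i' => if i = i' then 1 else 0
  refine ⟨w, fun j => ?_⟩
  have hφ := hu _ (subset_convexHull ℝ _ (Set.mem_range_self j))
  have hφ_eq : φ (fun i => (b j i : ℝ) - a j i) = wdeg w (b j) - wdeg w (a j) := by
    rw [← ContinuousLinearMap.coe_coe, LinearMap.pi_apply_eq_sum_univ, wdeg, wdeg,
      ← Finset.sum_sub_distrib]
    refine Finset.sum_congr rfl fun i _ => ?_
    simp only [ContinuousLinearMap.coe_coe, smul_eq_mul, w]
    ring
  rw [map_zero] at hu0
  linarith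

lemma TermOrder.exists_weight_of_finite (τ : TermOrder n) {G : Set (MvPolynomial (Fin n) k)}
    (hG : G.Finite) : ∃ w : Fin n → ℝ,
      ∀ g ∈ G, ∀ β ∈ g.support, β ≠ τ.leadExp g → wdeg w β < wdeg w (τ.leadExp g) := by
  have := hG.to_subtype
  obtain ⟨w, hw⟩ := τ.exists_weight (ι := Σ g : G, (g.1.support.erase (τ.leadExp g.1)))
    (a := fun j => j.2.1) (b := fun j => τ.leadExp j.1.1) fun ⟨⟨g, _⟩, β, hβ⟩ =>
      have hg0 : g ≠ 0 := fun h0 => by simp [h0] at hβ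
      (τ.leadExp_spec hg0).2 β (Finset.mem_of_mem_erase hβ) (Finset.ne_of_mem_erase hβ)
  exact ⟨w, fun g hg β hβ hne => hw ⟨⟨g, hg⟩, β, Finset.mem_erase.2 ⟨hne, hβ⟩⟩⟩

lemma coeff_initialForm (ω : Fin n → ℝ) (f : MvPolynomial (Fin n) k) (γ : Fin n →₀ ℕ) :
    (initialForm ω f).coeff γ =
      if γ ∈ f.support ∧ ∀ β ∈ f.support, wdeg ω β ≤ wdeg ω γ then f.coeff γ else 0 := by
  classical
  rw [initialForm, coeff_sum]
  simp only [coeff_monomial, Finset.sum_ite_eq', Finset.mem_filter]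

lemma mem_support_initialForm {ω : Fin n → ℝ} {f : MvPolynomial (Fin n) k} {γ : Fin n →₀ ℕ} :
    γ ∈ (initialForm ω f).support ↔ γ ∈ f.support ∧ ∀ β ∈ f.support, wdeg ω β ≤ wdeg ω γ := by
  rw [mem_support_iff, coeff_initialForm]
  split_ifs with h
  · exact iff_of_true (mem_support_iff.1 h.1) h
  · exact iff_of_false (not_not.2 rfl) h

lemma initialForm_ne_zero (ω : Fin n → ℝ) {f : MvPolynomial (Fin n) k} (hf : f ≠ 0) :
    initialForm ω f ≠ 0 := by
  obtain ⟨a, ha, hmax⟩ := Finset.exists_max_image f.support (wdeg ω) (support_nonempty.2 hf)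
  intro h0
  simpa [h0] using mem_support_initialForm.2 ⟨ha, hmax⟩

lemma initialForm_eq_initialTerm (τ : TermOrder n) (ω : Fin n → ℝ) {f : MvPolynomial (Fin n) k}
    (hf : f ≠ 0) (h : ∀ β ∈ f.support, β ≠ τ.leadExp f → wdeg ω β < wdeg ω (τ.leadExp f)) :
    initialForm ω f = τ.initialTerm f := by
  ext γ
  rw [coeff_initialForm, TermOrder.initialTerm, coeff_monomial]
  by_cases hγ : γ = τ.leadExp f
  · have hmax : ∀ β ∈ f.support, wdeg ω β ≤ wdeg ω (τ.leadExp f) := fun β hβ => by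
      rcases eq_or_ne β (τ.leadExp f) with rfl | hne
      exacts [le_rfl, (h β hβ hne).le]
    rw [if_pos (hγ ▸ ⟨(τ.leadExp_spec hf).1, hmax⟩), if_pos hγ.symm, hγ]
  · rw [if_neg (Ne.symm hγ), if_neg fun ⟨hγf, hmax⟩ =>
      (h γ hγf hγ).not_ge (hmax _ (τ.leadExp_spec hf).1)]

lemma initialTerm_initialForm_eq_iff (τ : TermOrder n) (ω : Fin n → ℝ)
    {f : MvPolynomial (Fin n) k} (hf : f ≠ 0) :
    τ.initialTerm (initialForm ω f) = τ.initialTerm f ↔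
      ∀ β ∈ f.support, wdeg ω β ≤ wdeg ω (τ.leadExp f) := by
  have hlead := τ.leadExp_spec hf
  constructor
  · intro h
    have hmem := τ.support_initialTerm_subset _ (h ▸ τ.leadExp_mem_support_initialTerm hf)
    exact (mem_support_initialForm.1 hmem).2
  · intro h
    have hmem : τ.leadExp f ∈ (initialForm ω f).support := mem_support_initialForm.2 ⟨hlead.1, h⟩
    have hl : τ.leadExp (initialForm ω f) = τ.leadExp f := τ.leadExp_eq_of_forall_lt hmem
      fun β hβ hne => hlead.2 β (mem_support_initialForm.1 hβ).1 hne
    rw [TermOrder.initialTerm, TermOrder.initialTerm, hl, coeff_initialForm, if_pos ⟨hlead.1, h⟩]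

section Reduction

variable {τ : TermOrder n} {u : Fin n → ℝ}

lemma exists_mul_coeff_eq_of_leadExp_le {g : MvPolynomial (Fin n) k} (hg : g ≠ 0)
    (hdom : ∀ β ∈ g.support, β ≠ τ.leadExp g → wdeg u β < wdeg u (τ.leadExp g))
    {e : Fin n →₀ ℕ} (hle : τ.leadExp g ≤ e) (c : k) :
    ∃ p : MvPolynomial (Fin n) k, (p * g).coeff e = c ∧
      ∀ γ ∈ (p * g).support, γ ≠ e → τ.lt γ e ∧ wdeg u γ < wdeg u e := by
  obtain ⟨hgm, hgmax⟩ := τ.leadExp_spec hg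
  generalize τ.leadExp g = m at *
  refine ⟨monomial (e - m) (c / g.coeff m), ?_, fun γ hγ hne => ?_⟩
  · rw [coeff_monomial_mul', if_pos tsub_le_self, tsub_tsub_cancel_of_le hle,
      div_mul_cancel₀ c (mem_support_iff.1 hgm)]
  · rw [mem_support_iff, coeff_monomial_mul'] at hγ
    split_ifs at hγ with hs
    · have hβ : γ - (e - m) ∈ g.support := mem_support_iff.2 (right_ne_zero_of_mul hγ)
      have hγ' : γ - (e - m) + (e - m) = γ := tsub_add_cancel_of_le hs
      have he : m + (e - m) = e := add_tsub_cancel_of_le hle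
      have hβm : γ - (e - m) ≠ m := fun h => hne (by rw [← hγ', h, he])
      refine ⟨?_, ?_⟩
      · have := τ.add_right _ _ (e - m) (hgmax _ hβ hβm)
        rwa [hγ', he] at this
      · calc wdeg u γ = wdeg u (γ - (e - m)) + wdeg u (e - m) := by rw [← wdeg_add, hγ']
          _ < wdeg u m + wdeg u (e - m) := by linarith [hdom _ hβ hβm]
          _ = wdeg u e := by rw [← wdeg_add, he]
    · exact absurd rfl hγ

lemma mem_support_initialForm_sub {ω : Fin n → ℝ} {f h : MvPolynomial (Fin n) k}
    {α e : Fin n →₀ ℕ} (hα : α ∈ (initialForm ω f).support) (he : e ∈ f.support) (hαe : α ≠ e)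
    (hh : ∀ γ ∈ h.support, γ ≠ e → wdeg ω γ < wdeg ω e) :
    α ∈ (initialForm ω (f - h)).support := by
  classical
  obtain ⟨hαf, hαmax⟩ := mem_support_initialForm.1 hα
  have heα : wdeg ω e ≤ wdeg ω α := hαmax e he
  have hαh : h.coeff α = 0 := notMem_support_iff.1 fun hαh =>
    (hh α hαh hαe).not_ge heα
  refine mem_support_initialForm.2 ⟨?_, fun δ hδ => ?_⟩
  · rwa [mem_support_iff, coeff_sub, hαh, sub_zero, ← mem_support_iff]
  · rcases Finset.mem_union.1 (support_sub _ f h hδ) with hδf | hδh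
    · exact hαmax δ hδf
    · rcases eq_or_ne δ e with rfl | hne
      exacts [heα, (hh δ hδh hne).le.trans heα]

/-- Induction on the `τ`-leading exponent: cancelling it by a multiple of an element of `G`
keeps every `u`-heaviest exponent other than it. -/
lemma exists_leadExp_le_of_mem_support_initialForm {I : Ideal (MvPolynomial (Fin n) k)}
    {G : Set (MvPolynomial (Fin n) k)} (hGI : G ⊆ I)
    (hlead : ∀ f ∈ I, f ≠ 0 → ∃ g ∈ G, τ.leadExp g ≤ τ.leadExp f)
    (hG0 : ∀ g ∈ G, g ≠ 0)
    (hdom : ∀ g ∈ G, ∀ β ∈ g.support, β ≠ τ.leadExp g → wdeg u β < wdeg u (τ.leadExp g))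
    {f : MvPolynomial (Fin n) k} (hf : f ∈ I) {α : Fin n →₀ ℕ}
    (hα : α ∈ (initialForm u f).support) : ∃ g ∈ G, τ.leadExp g ≤ α := by
  induction f using (InvImage.wf τ.leadExp τ.wellFounded_lt).induction with
  | _ f ih =>
  have hfα : α ∈ f.support := (mem_support_initialForm.1 hα).1
  have hf0 : f ≠ 0 := fun h0 => by simp [h0] at hfα
  obtain ⟨hef, hemax⟩ := τ.leadExp_spec hf0
  obtain ⟨g, hgG, hge⟩ := hlead f hf hf0
  rcases eq_or_ne α (τ.leadExp f) with rfl | hαe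
  · exact ⟨g, hgG, hge⟩
  obtain ⟨p, hpe, hp⟩ :=
    exists_mul_coeff_eq_of_leadExp_le (hG0 g hgG) (hdom g hgG) hge (f.coeff (τ.leadExp f))
  have hα' := mem_support_initialForm_sub hα hef hαe fun γ hγ hne => (hp γ hγ hne).2
  have hlt : ∀ γ ∈ (f - p * g).support, τ.lt γ (τ.leadExp f) := by
    classical
    intro γ hγ
    have hne : γ ≠ τ.leadExp f := by
      rintro rfl
      simp [coeff_sub, hpe] at hγ
    rcases Finset.mem_union.1 (support_sub _ f _ hγ) with hγf | hγp
    exacts [hemax γ hγf hne, (hp γ hγp hne).1]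
  have hf'0 : f - p * g ≠ 0 := fun h0 => by simpa [h0] using (mem_support_initialForm.1 hα').1
  exact ih _ (hlt _ (τ.leadExp_spec hf'0).1) (I.sub_mem hf (I.mul_mem_left p (hGI hgG))) hα'

end Reduction

namespace IsGroebnerBasis

variable {τ : TermOrder n} {I : Ideal (MvPolynomial (Fin n) k)} {G : Set (MvPolynomial (Fin n) k)}

lemma subset (hG : IsGroebnerBasis τ I G) : G ⊆ I :=
  hG.2.1 ▸ Ideal.subset_span

lemma mem_initialIdeal_iff (hG : IsGroebnerBasis τ I G)
    (hmonic : ∀ g ∈ G, g.coeff (τ.leadExp g) = 1) {p : MvPolynomial (Fin n) k} :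
    p ∈ τ.initialIdeal I ↔ ∀ α ∈ p.support, ∃ g ∈ G, τ.leadExp g ≤ α := by
  have hspan :
      τ.initialIdeal I = Ideal.span ((fun s => monomial s (1 : k)) '' (τ.leadExp '' G)) := by
    rw [hG.2.2, Set.image_image]
    congr 1
    exact Set.image_congr fun g hg => by rw [TermOrder.initialTerm, hmonic g hg]
  rw [hspan, mem_ideal_span_monomial_image]
  simp only [Set.exists_mem_image]

lemma exists_leadExp_le (hG : IsGroebnerBasis τ I G)
    (hmonic : ∀ g ∈ G, g.coeff (τ.leadExp g) = 1) {f : MvPolynomial (Fin n) k} (hf : f ∈ I)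
    (hf0 : f ≠ 0) : ∃ g ∈ G, τ.leadExp g ≤ τ.leadExp f :=
  (hG.mem_initialIdeal_iff hmonic).1 (Ideal.subset_span ⟨f, hf, hf0, rfl⟩) _
    (τ.leadExp_mem_support_initialTerm hf0)

lemma initialFormIdeal_eq (hG : IsGroebnerBasis τ I G)
    (hmonic : ∀ g ∈ G, g.coeff (τ.leadExp g) = 1) {u : Fin n → ℝ}
    (hdom : ∀ g ∈ G, ∀ β ∈ g.support, β ≠ τ.leadExp g → wdeg u β < wdeg u (τ.leadExp g)) :
    initialFormIdeal u I = τ.initialIdeal I := by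
  have hG0 : ∀ g ∈ G, g ≠ 0 := fun g hg h0 => by simpa [h0] using hmonic g hg
  apply le_antisymm
  · refine Ideal.span_le.2 ?_
    rintro _ ⟨f, hf, rfl⟩
    exact (hG.mem_initialIdeal_iff hmonic).2 fun α hα =>
      exists_leadExp_le_of_mem_support_initialForm hG.subset
        (fun f hf hf0 => hG.exists_leadExp_le hmonic hf hf0) hG0 hdom hf hα
  · rw [hG.2.2, Ideal.span_le]
    rintro _ ⟨g, hg, rfl⟩
    rw [← initialForm_eq_initialTerm τ u (hG0 g hg) (hdom g hg)]
    exact Ideal.subset_span ⟨g, hG.subset hg, rfl⟩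

end IsGroebnerBasis

namespace IsReducedGroebnerBasis

variable {τ : TermOrder n} {I : Ideal (MvPolynomial (Fin n) k)} {G : Set (MvPolynomial (Fin n) k)}

lemma ne_zero (hG : IsReducedGroebnerBasis τ I G) {g : MvPolynomial (Fin n) k} (hg : g ∈ G) :
    g ≠ 0 :=
  fun h0 => by simpa [h0] using hG.2.1 g hg

/-- Since no tail monomial of `g` lies in `in_τ(I)`, the initial form `in_u(g) ∈ in_τ(I)` must
be a multiple of the leading term. -/
lemma wdeg_le_wdeg_leadExp (hG : IsReducedGroebnerBasis τ I G) {u : Fin n → ℝ}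
    (hu : initialFormIdeal u I = τ.initialIdeal I) {g : MvPolynomial (Fin n) k} (hg : g ∈ G) :
    ∀ β ∈ g.support, wdeg u β ≤ wdeg u (τ.leadExp g) := by
  classical
  have hin : initialForm u g ∈ τ.initialIdeal I := hu ▸ Ideal.subset_span ⟨g, hG.1.subset hg, rfl⟩
  obtain ⟨α, hα⟩ := support_nonempty.2 (initialForm_ne_zero u (hG.ne_zero hg))
  obtain ⟨hαg, hαmax⟩ := mem_support_initialForm.1 hα
  suffices α = τ.leadExp g from this ▸ hαmax
  by_contra hne
  refine hG.2.2.1 g hg α hαg hne ((hG.1.mem_initialIdeal_iff hG.2.1).2 fun α' hα' => ?_)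
  rw [support_monomial, if_neg one_ne_zero, Finset.mem_singleton] at hα'
  exact hα' ▸ (hG.1.mem_initialIdeal_iff hG.2.1).1 hin α hα

end IsReducedGroebnerBasis

lemma mem_closure_of_forall_add_smul_mem {E : Type*} [AddCommGroup E] [Module ℝ E]
    [TopologicalSpace E] [ContinuousAdd E] [ContinuousSMul ℝ E] {s : Set E} {v w : E}
    (h : ∀ ε : ℝ, 0 < ε → v + ε • w ∈ s) : v ∈ closure s := by
  have hlim : Filter.Tendsto (fun ε : ℝ => v + ε • w) (nhdsWithin 0 (Set.Ioi 0)) (nhds v) := by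
    have : Continuous fun ε : ℝ => v + ε • w := by fun_prop
    simpa using (this.tendsto 0).mono_left nhdsWithin_le_nhds
  exact mem_closure_of_tendsto hlim (eventually_nhdsWithin_of_forall h)

/-- `v ∈ C_≺(I)` iff `in_≺(in_v(g)) = in_≺(g)` for every `g` in the reduced
Gröbner basis `G_≺(I)`. -/
theorem mem_Cprec_iff (τ : TermOrder n) (I : Ideal (MvPolynomial (Fin n) k))
    (G : Set (MvPolynomial (Fin n) k)) (hG : IsReducedGroebnerBasis τ I G)
    (v : Fin n → ℝ) :
    v ∈ Cprec τ I ↔ ∀ g ∈ G, τ.initialTerm (initialForm v g) = τ.initialTerm g := by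
  rw [forall₂_congr fun g hg => initialTerm_initialForm_eq_iff τ v (hG.ne_zero hg)]
  constructor
  · intro hv g hg
    have hclosed : IsClosed {u : Fin n → ℝ | ∀ β ∈ g.support, wdeg u β ≤ wdeg u (τ.leadExp g)} := by
      simp only [Set.ofPred_forall]
      exact isClosed_biInter fun β _ => isClosed_le (continuous_wdeg β) (continuous_wdeg _)
    exact closure_minimal (fun u hu => hG.wdeg_le_wdeg_leadExp hu hg) hclosed hv
  · intro hv
    obtain ⟨w, hw⟩ := τ.exists_weight_of_finite hG.1.1
    refine mem_closure_of_forall_add_smul_mem (w := w) fun ε hε =>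
      hG.1.initialFormIdeal_eq hG.2.1 fun g hg β hβ hne => ?_
    rw [wdeg_add_smul, wdeg_add_smul]
    nlinarith [hv g hg β hβ, hw g hg β hβ hne]
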